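/- Let σ ∈ (-3/2, -1/2), κ = (2σ+1)/(2σ), and for Ω ≥ 1, Z ≥ 1 with Z ≤ Ω set M_σ(Ω,Z) as before. Then Ω² M_σ(Ω,Z) M_{-σ}(Ω,Z) ≤ C Ω^{-1} for a constant C depending only on σ, uniformly over the parameter region. -/

import Mathlib

/-!
Both sums are bounded termwise by multiples of convergent `p`-series. For `τ = -σ ∈ [0, 3/2)`,
`(k² + Z²)^τ ≤ 2^τ k^{2τ} Z^{2τ}` and `k²(k⁴ + Ω⁴) ≥ k⁴ Ω²` give `M_τ² ≲ Z^{2τ} Ω⁻²`; for `σ ≤ 0`,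
`(k² + Z²)^σ ≤ Z^{2σ}` and `k²(k⁴ + Ω⁴) ≥ k² Ω⁴` give `M_σ² ≲ Z^{2σ} Ω⁻⁴`. The powers of `Z`
cancel in the product, leaving `Ω² M_τ M_σ ≲ Ω² · Ω⁻³`.
-/

open Real

/-- The paper's `M_s(Ω, Z)²`, with the summation index shifted to start at `0`. -/
noncomputable def mSq (s Ω Z : ℝ) : ℝ :=
  ∑' k : ℕ, ((k + 1 : ℝ) ^ 2 + Z ^ 2) ^ s / ((k + 1 : ℝ) ^ 2 * ((k + 1 : ℝ) ^ 4 + Ω ^ 4))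

lemma summable_nat_add_one_rpow {p : ℝ} (hp : p < -1) :
    Summable (fun k : ℕ => ((k : ℝ) + 1) ^ p) := by
  simpa using (summable_nat_add_iff 1).mpr (Real.summable_nat_rpow.mpr hp)

lemma mSq_le_mul_tsum {s Ω Z c p : ℝ} (hp : p < -1)
    (hle : ∀ x : ℝ, 1 ≤ x → (x ^ 2 + Z ^ 2) ^ s / (x ^ 2 * (x ^ 4 + Ω ^ 4)) ≤ c * x ^ p) :
    mSq s Ω Z ≤ c * ∑' k : ℕ, ((k : ℝ) + 1) ^ p := by
  have hle' : ∀ k : ℕ, ((k + 1 : ℝ) ^ 2 + Z ^ 2) ^ s / ((k + 1 : ℝ) ^ 2 * ((k + 1 : ℝ) ^ 4 + Ω ^ 4))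
      ≤ c * ((k : ℝ) + 1) ^ p := fun k => hle _ (by linarith [k.cast_nonneg (α := ℝ)])
  have hg := (summable_nat_add_one_rpow hp).mul_left c
  rw [mSq, ← tsum_mul_left]
  exact (Summable.of_nonneg_of_le (fun k => by positivity) hle' hg).tsum_le_tsum hle' hg

lemma sq_add_sq_le_two_mul_sq_mul_sq {x Z : ℝ} (hx : 1 ≤ x) (hZ : 1 ≤ Z) :
    x ^ 2 + Z ^ 2 ≤ 2 * x ^ 2 * Z ^ 2 := by
  nlinarith [mul_nonneg (sub_nonneg.mpr (one_le_pow₀ hx (n := 2)))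
    (sub_nonneg.mpr (one_le_pow₀ hZ (n := 2)))]

lemma mSq_le_of_nonneg {τ Ω Z : ℝ} (hτ₀ : 0 ≤ τ) (hτ : τ < 3 / 2) (hZ : 1 ≤ Z) (hΩ : 0 < Ω) :
    mSq τ Ω Z ≤ 2 ^ τ * (Z ^ 2) ^ τ / Ω ^ 2 * ∑' k : ℕ, ((k : ℝ) + 1) ^ (2 * τ - 4) := by
  refine mSq_le_mul_tsum (by linarith) fun x hx => ?_
  have hx₀ : 0 < x := by linarith
  have hnum : (x ^ 2 + Z ^ 2) ^ τ ≤ 2 ^ τ * (x ^ 2) ^ τ * (Z ^ 2) ^ τ := by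
    rw [← mul_rpow (by positivity) (by positivity), ← mul_rpow (by positivity) (by positivity)]
    exact rpow_le_rpow (by positivity) (sq_add_sq_le_two_mul_sq_mul_sq hx hZ) hτ₀
  have hden : x ^ 4 * Ω ^ 2 ≤ x ^ 2 * (x ^ 4 + Ω ^ 4) := by
    nlinarith [mul_nonneg (sq_nonneg x) (sq_nonneg (x ^ 2 - Ω ^ 2)), sq_nonneg (x * Ω)]
  have hpow : (x ^ 2) ^ τ = x ^ (2 * τ - 4) * x ^ 4 := by
    rw [← rpow_natCast x 4, ← rpow_add hx₀, ← rpow_natCast x 2, ← rpow_mul hx₀.le]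
    norm_num
  calc (x ^ 2 + Z ^ 2) ^ τ / (x ^ 2 * (x ^ 4 + Ω ^ 4))
      ≤ 2 ^ τ * (x ^ 2) ^ τ * (Z ^ 2) ^ τ / (x ^ 4 * Ω ^ 2) :=
        div_le_div₀ (by positivity) hnum (by positivity) hden
    _ = 2 ^ τ * (Z ^ 2) ^ τ / Ω ^ 2 * x ^ (2 * τ - 4) := by
        rw [hpow]; field_simp

lemma mSq_le_of_nonpos {σ Ω Z : ℝ} (hσ : σ ≤ 0) (hZ : 0 < Z) (hΩ : 0 < Ω) :
    mSq σ Ω Z ≤ (Z ^ 2) ^ σ / Ω ^ 4 * ∑' k : ℕ, ((k : ℝ) + 1) ^ (-2 : ℝ) := by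
  refine mSq_le_mul_tsum (by norm_num) fun x hx => ?_
  have hx₀ : 0 < x := by linarith
  have hnum : (x ^ 2 + Z ^ 2) ^ σ ≤ (Z ^ 2) ^ σ :=
    rpow_le_rpow_of_nonpos (by positivity) (by nlinarith) hσ
  have hden : x ^ 2 * Ω ^ 4 ≤ x ^ 2 * (x ^ 4 + Ω ^ 4) := by nlinarith [pow_pos hx₀ 2, pow_pos hx₀ 4]
  have hpow : x ^ (-2 : ℝ) = (x ^ 2)⁻¹ := by
    rw [rpow_neg hx₀.le, ← rpow_natCast x 2]; norm_num
  calc (x ^ 2 + Z ^ 2) ^ σ / (x ^ 2 * (x ^ 4 + Ω ^ 4))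
      ≤ (Z ^ 2) ^ σ / (x ^ 2 * Ω ^ 4) :=
        div_le_div₀ (by positivity) hnum (by positivity) hden
    _ = (Z ^ 2) ^ σ / Ω ^ 4 * x ^ (-2 : ℝ) := by
        rw [hpow]; field_simp

theorem stmt_18 (σ : ℝ) (hσ : σ ∈ Set.Ioo (-(3:ℝ)/2) (-(1:ℝ)/2)) :
    ∃ C > 0, ∀ Ω Z : ℝ, 1 ≤ Z → Z ≤ Ω →
      Ω^2
        * Real.sqrt (∑' k : ℕ, ((k+1:ℝ)^2 + Z^2) ^ (-σ) / ((k+1:ℝ)^2 * ((k+1:ℝ)^4 + Ω^4)))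
        * Real.sqrt (∑' k : ℕ, ((k+1:ℝ)^2 + Z^2) ^ σ / ((k+1:ℝ)^2 * ((k+1:ℝ)^4 + Ω^4)))
      ≤ C / Ω := by
  obtain ⟨hσ₁, hσ₂⟩ := hσ
  set A := ∑' k : ℕ, ((k : ℝ) + 1) ^ (2 * -σ - 4)
  set B := ∑' k : ℕ, ((k : ℝ) + 1) ^ (-2 : ℝ)
  have hA : 0 < A := (summable_nat_add_one_rpow (by linarith)).tsum_pos
    (fun k => by positivity) 0 (by positivity)
  have hB : 0 < B := (summable_nat_add_one_rpow (by norm_num)).tsum_pos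
    (fun k => by positivity) 0 (by positivity)
  refine ⟨sqrt (2 ^ (-σ) * A * B), by positivity, fun Ω Z hZ hZΩ => ?_⟩
  have hΩ : 0 < Ω := by linarith
  have h₁ : mSq (-σ) Ω Z ≤ _ := mSq_le_of_nonneg (by linarith) (by linarith) hZ hΩ
  have h₂ : mSq σ Ω Z ≤ _ := mSq_le_of_nonpos (by linarith) (by linarith) hΩ
  calc Ω ^ 2 * sqrt (mSq (-σ) Ω Z) * sqrt (mSq σ Ω Z)
      ≤ Ω ^ 2 * sqrt (2 ^ (-σ) * (Z ^ 2) ^ (-σ) / Ω ^ 2 * A)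
          * sqrt ((Z ^ 2) ^ σ / Ω ^ 4 * B) := by gcongr
    _ = Ω ^ 2 * sqrt ((2 ^ (-σ) * A * B) / (Ω ^ 3) ^ 2) := by
        rw [mul_assoc, ← sqrt_mul (by positivity), rpow_neg (sq_nonneg Z)]
        field_simp
    _ = sqrt (2 ^ (-σ) * A * B) / Ω := by
        rw [sqrt_div' _ (by positivity), sqrt_sq (by positivity)]
        field_simp
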